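/- arXiv:2103.07876 — 2 statements merged into one kernel-verified Lean document; each statement's English description precedes it below -/
import Mathlib

section
/- Let A, B, C be categories, let f : B → A be a functor, and let g : B → C be a functor with a fully faithful right adjoint g_* such that the counit of the adjunction g ⊣ g_* is an isomorphism (i.e. g ∘ g_* ≅ id). Suppose A is the category of presheaves on a small category 𝔞, f = f^* is the restriction of a left Kan extension situation with f^* ∘ Y_𝔞 given. Then defining h^* := Lan_{Y_𝔞}(g_* ∘ f^* ∘ Y_𝔞), one has g^* ∘ h^* ≅ f^*, where g^* is the left adjoint of g_*; in particular presheaf categories over finitely complete small categories are injective with respect to flat embeddings. -/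
/-!
Both `yoneda.leftKanExtension (yoneda ⋙ f^* ⋙ g_*) ⋙ g^*` and `f^*` preserve colimits (a left Kan
extension along Yoneda is cocontinuous and `g^*` is a left adjoint), so by density of representables
it suffices to compare them on representables. There the first one is
`yoneda ⋙ f^* ⋙ g_* ⋙ g^*`, because Yoneda is fully faithful, and the counit `g_* ⋙ g^* ≅ 𝟭`
is an isomorphism because `g_*` is fully faithful.
-/

open CategoryTheory Limits

universe u

namespace CategoryTheory.Presheaf

variable {𝔞 : Type u} [SmallCategory 𝔞] {ℰ : Type*} [Category.{u} ℰ] [HasColimits ℰ]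

lemma preservesColimits_of_isLeftKanExtension_yoneda {A : 𝔞 ⥤ ℰ}
    (L : (𝔞ᵒᵖ ⥤ Type u) ⥤ ℰ) (α : A ⟶ yoneda ⋙ L) [L.IsLeftKanExtension α] :
    PreservesColimits L := by
  have hL := (Functor.isLeftKanExtension_iff_postcomp₁ (𝟭 _)
    (Functor.rightUnitor uliftYoneda.{u} ≪≫ uliftYonedaIsoYoneda) α).1 inferInstance
  exact ((isLeftKanExtension_along_uliftYoneda_iff _ _).1 hL).2

noncomputable def isoOfYonedaCompIso (L L' : (𝔞ᵒᵖ ⥤ Type u) ⥤ ℰ)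
    [PreservesColimits L] [PreservesColimits L'] (e : yoneda ⋙ L ≅ yoneda ⋙ L') : L ≅ L' :=
  uniqueExtensionAlongULiftYoneda L
      (Functor.isoWhiskerRight uliftYonedaIsoYoneda L' ≪≫ e.symm ≪≫
        Functor.isoWhiskerRight uliftYonedaIsoYoneda.symm L) ≪≫
    (uniqueExtensionAlongULiftYoneda L' (Iso.refl _)).symm

end CategoryTheory.Presheaf

theorem stmt4_general {𝔞 : Type u} [SmallCategory 𝔞]
    {B : Type (u + 1)} [Category.{u} B] {C : Type (u + 1)} [Category.{u} C]
    [HasColimits B] [HasColimits C]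
    (fstar : (𝔞ᵒᵖ ⥤ Type u) ⥤ B) [PreservesColimits fstar]
    (gstar : C ⥤ B) (gs : B ⥤ C) (adj : gstar ⊣ gs) [gs.Full] [gs.Faithful] :
    Nonempty (yoneda.leftKanExtension (yoneda ⋙ fstar ⋙ gs) ⋙ gstar ≅ fstar) := by
  set A := yoneda ⋙ fstar ⋙ gs
  have := Presheaf.preservesColimits_of_isLeftKanExtension_yoneda _ (yoneda.leftKanExtensionUnit A)
  have := adj.leftAdjoint_preservesColimits
  have := adj.counit_isIso_of_R_fully_faithful
  have : IsIso (yoneda.leftKanExtensionUnit A) :=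
    (Functor.isPointwiseLeftKanExtensionOfIsLeftKanExtension _
      (yoneda.leftKanExtensionUnit A)).isIso_hom
  refine ⟨Presheaf.isoOfYonedaCompIso _ _ ?_⟩
  calc yoneda ⋙ yoneda.leftKanExtension A ⋙ gstar
      ≅ (yoneda ⋙ yoneda.leftKanExtension A) ⋙ gstar := (Functor.associator _ _ _).symm
    _ ≅ (yoneda ⋙ fstar) ⋙ gs ⋙ gstar :=
        Functor.isoWhiskerRight (asIso (yoneda.leftKanExtensionUnit A)).symm gstar
    _ ≅ yoneda ⋙ fstar :=
        Functor.isoWhiskerLeft _ (asIso adj.counit) ≪≫ Functor.rightUnitor _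

theorem stmt4 {𝔞 : Type u} [SmallCategory 𝔞] [HasFiniteLimits 𝔞]
    {B : Type (u + 1)} [Category.{u} B] {C : Type (u + 1)} [Category.{u} C]
    [HasColimits B] [HasColimits C]
    (fstar : (𝔞ᵒᵖ ⥤ Type u) ⥤ B) [PreservesColimits fstar] [PreservesFiniteLimits fstar]
    (gstar : C ⥤ B) (gs : B ⥤ C) (adj : gstar ⊣ gs) [gs.Full] [gs.Faithful]
    [PreservesFiniteLimits gstar] :
    Nonempty (yoneda.leftKanExtension (yoneda ⋙ fstar ⋙ gs) ⋙ gstar ≅ fstar) :=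
  stmt4_general fstar gstar gs adj
end

section
/- Every retract of a finitely accessible category (in the 2-category of categories with filtered colimits and filtered-colimit-preserving functors) is a continuous category: if r : K → A and s : A → K preserve filtered colimits with r ∘ s ≅ id_A and K is finitely accessible, then the colimit functor colim : Ind(A) → A has a left adjoint. -/
/-! Fix `a : A` and write `s a` as the filtered colimit of its canonical diagram of representables
`y cᵢ`. Put `P := colim_i y (r (y cᵢ))` in `Ind A`; since `r` preserves filtered colimits,
`a ≅ r (s a) ≅ colim_i r (y cᵢ)` maps to `colimA P`, which gives a natural map
`Hom(P, X) → Hom(a, colimA X)`. It has a natural section: for `X = colim_j y xⱼ` and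
`g : a ⟶ colimA X`, each composite `y cᵢ ⟶ s a ⟶ s (colimA X) ≅ colim_j s xⱼ` factors, essentially
uniquely, through some `s xⱼ` because `y cᵢ` is compact, and applying `r` and `ρ` yields
`r (y cᵢ) ⟶ xⱼ`. So `Hom(a, colimA -)` is a retract of the corepresentable functor `Hom(P, -)`.
Idempotents split in `Ind A` (it has sequential colimits), hence `Hom(a, colimA -)` is itself
corepresentable, and `colimA` has a left adjoint. -/

open CategoryTheory Limits Opposite

universe v u v₁ u₁

namespace CategoryTheory

section Idempotents

variable {D : Type u₁} [Category.{v₁} D]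

lemma Retract.r_app_i_app {F G : D ⥤ Type v₁} (h : Retract F G) (X : D) (x : F.obj X) :
    h.r.app X (h.i.app X x) = x :=
  types_congr_hom (congr_app h.retract X) x

theorem Functor.isCorepresentable_of_retract_coyoneda [IsIdempotentComplete D]
    {F : D ⥤ Type v₁} {P : D} (h : Retract F (coyoneda.obj (op P))) : F.IsCorepresentable := by
  set e : P ⟶ P := h.i.app P (h.r.app P (𝟙 P))
  have he {X : D} (f : P ⟶ X) : h.i.app X (h.r.app X f) = e ≫ f := by
    simpa using NatTrans.naturality_apply (h.r ≫ h.i) f (𝟙 P)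
  have he_idem : e ≫ e = e := by rw [← he, h.r_app_i_app]
  obtain ⟨Q, i, p, hip, hpi⟩ := IsIdempotentComplete.idempotents_split P e he_idem
  refine ⟨Q, ⟨?_⟩⟩
  exact
    { homEquiv.toFun f := h.r.app _ (p ≫ f)
      homEquiv.invFun x := i ≫ h.i.app _ x
      homEquiv.left_inv f := by simp only [he, ← hpi, Category.assoc, reassoc_of% hip]
      homEquiv.right_inv x := by
        dsimp only
        rw [← Category.assoc, hpi, ← he, h.r_app_i_app, h.r_app_i_app]
      homEquiv_comp g f := by
        simpa using NatTrans.naturality_apply h.r g (show (coyoneda.obj (op P)).obj _ from p ≫ f) }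

theorem isIdempotentComplete_of_hasColimitsOfShape_nat [HasColimitsOfShape ℕ D] :
    IsIdempotentComplete D := by
  refine ⟨fun X p hp => ?_⟩
  let F : ℕ ⥤ D := Functor.ofSequence (X := fun _ => X) (fun _ => p)
  let c : Cocone F := ⟨X, NatTrans.ofSequence (fun _ => p) fun _ => by
    simp only [F, Functor.ofSequence_map_homOfLE_succ]
    exact hp.trans (Category.comp_id p).symm⟩
  let ι (n : ℕ) : X ⟶ colimit F := colimit.ι F n
  have hstep (n : ℕ) : p ≫ ι (n + 1) = ι n := by
    have := colimit.w F (homOfLE (Nat.le_add_right n 1))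
    rwa [Functor.ofSequence_map_homOfLE_succ] at this
  have hfix (n : ℕ) : p ≫ ι n = ι n := by
    rw [← hstep, reassoc_of% hp]
  have hconst (n : ℕ) : ι n = ι 0 := by
    induction n with
    | zero => rfl
    | succ n ih => rw [← ih, ← hstep n, hfix]
  have hdesc : ι 0 ≫ colimit.desc F c = p := colimit.ι_desc c 0
  refine ⟨colimit F, colimit.desc F c, ι 0, colimit.hom_ext fun n => ?_, hdesc⟩
  change ι n ≫ colimit.desc F c ≫ ι 0 = ι n ≫ 𝟙 _
  rw [hconst n, reassoc_of% hdesc, hfix, Category.comp_id]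

instance Ind.isIdempotentComplete (B : Type u₁) [Category.{v₁} B] : IsIdempotentComplete (Ind B) :=
  have := hasFilteredColimitsOfSize_shrink.{0, 0} (C := Ind B)
  isIdempotentComplete_of_hasColimitsOfShape_nat

end Idempotents

namespace Adjunction

variable {C D : Type*} [Category C] [Category D] {L : D ⥤ C} {R : C ⥤ D} (adj : L ⊣ R)
  [IsIso adj.counit] {J : Type*} [Category J] {F : J ⥤ C}

lemma inv_counit_app_comp_map_map {X Y : C} (f : X ⟶ Y) :
    inv (adj.counit.app X) ≫ L.map (R.map f) = f ≫ inv (adj.counit.app Y) := by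
  simp

noncomputable def coconeOfCompRight (c : Cocone (F ⋙ R)) : Cocone F where
  pt := L.obj c.pt
  ι.app j := inv (adj.counit.app (F.obj j)) ≫ L.map (c.ι.app j)
  ι.naturality j j' f := by
    dsimp only [Functor.const_obj_obj, Functor.const_obj_map]
    rw [Category.comp_id, ← c.w f, Functor.map_comp, IsIso.eq_inv_comp,
      ← adj.counit_naturality_assoc, IsIso.hom_inv_id_assoc]
    rfl

noncomputable def isColimitCoconeOfCompRight {c : Cocone (F ⋙ R)} (hc : IsColimit c) :
    IsColimit (adj.coconeOfCompRight c) :=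
  have := adj.leftAdjoint_preservesColimits
  ((IsColimit.precomposeHomEquiv (F.rightUnitor.symm ≪≫
    Functor.isoWhiskerLeft F (asIso adj.counit).symm ≪≫ (F.associator R L).symm) _).symm
      (isColimitOfPreserves L hc)).ofIsoColimit
    (Cocone.ext (Iso.refl _) (by simp [coconeOfCompRight]))

end Adjunction

namespace Ind

variable {B : Type u} [Category.{v} B]

noncomputable def uliftCoyonedaYonedaObjIso (b : B) :
    coyoneda.obj (op (Ind.yoneda.obj b)) ⋙ uliftFunctor.{u} ≅
      Ind.inclusion B ⋙ coyoneda.obj (op (CategoryTheory.yoneda.obj b)) :=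
  NatIso.ofComponents
    (fun W => Equiv.toIso
      (Equiv.ulift.trans
        ((Ind.inclusion.fullyFaithful (C := B)).homEquiv.trans
          (Iso.homCongr ((Ind.yonedaCompInclusion (C := B)).app b) (Iso.refl _)))))
    (fun f => by
      ext ⟨g⟩
      change _ ≫ (Ind.inclusion B).map (g ≫ f) = (_ ≫ (Ind.inclusion B).map g) ≫ _
      simp)

instance isFinitelyPresentable_yoneda_obj (b : B) :
    IsFinitelyPresentable.{v} (Ind.yoneda.obj b) := by
  rw [isFinitelyPresentable_iff_preservesFilteredColimits]
  refine ⟨fun J _ _ => ⟨fun {H} => ?_⟩⟩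
  have := preservesColimit_of_natIso H (uliftCoyonedaYonedaObjIso b).symm
  exact preservesColimit_of_reflects_of_preserves _ uliftFunctor.{u}

noncomputable def presentationι (X : Ind B) (j : X.presentation.I) :
    Ind.yoneda.obj (X.presentation.F.obj j) ⟶ X :=
  colimit.ι (X.presentation.F ⋙ Ind.yoneda) j ≫ (Ind.colimitPresentationCompYoneda X).hom

lemma yoneda_map_comp_presentationι (X : Ind B) {j j' : X.presentation.I} (α : j ⟶ j') :
    Ind.yoneda.map (X.presentation.F.map α) ≫ presentationι X j' = presentationι X j :=
  colimit.w_assoc (X.presentation.F ⋙ Ind.yoneda) α _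

noncomputable def presentationCocone (X : Ind B) : Cocone (X.presentation.F ⋙ Ind.yoneda) where
  pt := X
  ι.app := presentationι X
  ι.naturality _ _ α := by simpa using yoneda_map_comp_presentationι X α

noncomputable def isColimitPresentationCocone (X : Ind B) : IsColimit (presentationCocone X) :=
  (colimit.isColimit _).ofIsoColimit (Cocone.ext (Ind.colimitPresentationCompYoneda X) fun _ => rfl)

variable {colimB : Ind B ⥤ B} (adj : colimB ⊣ Ind.yoneda)

noncomputable def colimPresentationι (X : Ind B) (j : X.presentation.I) :
    X.presentation.F.obj j ⟶ colimB.obj X :=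
  inv (adj.counit.app _) ≫ colimB.map (presentationι X j)

lemma colimPresentationι_comp_map {X X' : Ind B} (φ : X ⟶ X') {j : X.presentation.I}
    {j' : X'.presentation.I} (u : X.presentation.F.obj j ⟶ X'.presentation.F.obj j')
    (hu : Ind.yoneda.map u ≫ presentationι X' j' = presentationι X j ≫ φ) :
    colimPresentationι adj X j ≫ colimB.map φ = u ≫ colimPresentationι adj X' j' := by
  rw [colimPresentationι, colimPresentationι, Category.assoc, ← Functor.map_comp, ← hu,
    Functor.map_comp, ← Category.assoc, adj.inv_counit_app_comp_map_map, Category.assoc]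

end Ind

namespace RetractOfInd

section Lift

variable {A : Type u} [Category.{v} A] {K : Type*} [Category.{v} K]
  (r : K ⥤ A) (s : A ⥤ K) (ρ : s ⋙ r ⟶ 𝟭 A)

lemma map_comp_map_comp_app {k : K} {b b' : A} (w : k ⟶ s.obj b) (g : b ⟶ b') :
    r.map (w ≫ s.map g) ≫ ρ.app b' = (r.map w ≫ ρ.app b) ≫ g := by
  simpa using congr_arg (r.map w ≫ ·) (ρ.naturality g)

lemma yoneda_map_comp_presentationι_map {k : K} {X : Ind A} {j j' : X.presentation.I}
    (α : j ⟶ j') (w : k ⟶ s.obj (X.presentation.F.obj j)) :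
    Ind.yoneda.map (r.map w ≫ ρ.app _) ≫ Ind.presentationι X j =
      Ind.yoneda.map (r.map (w ≫ s.map (X.presentation.F.map α)) ≫ ρ.app _) ≫
        Ind.presentationι X j' := by
  rw [map_comp_map_comp_app, Functor.map_comp Ind.yoneda (r.map w ≫ ρ.app _), Category.assoc,
    Ind.yoneda_map_comp_presentationι]

variable [PreservesFilteredColimits s] {colimA : Ind A ⥤ A} (adj : colimA ⊣ Ind.yoneda)
  {k : K} [IsFinitelyPresentable.{v} k]

lemma exists_comp_map_colimPresentationι_eq {X : Ind A} (f : k ⟶ s.obj (colimA.obj X)) :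
    ∃ (j : X.presentation.I) (w : k ⟶ s.obj (X.presentation.F.obj j)),
      w ≫ s.map (Ind.colimPresentationι adj X j) = f :=
  IsFinitelyPresentable.exists_hom_of_isColimit
    (isColimitOfPreserves s (adj.isColimitCoconeOfCompRight (Ind.isColimitPresentationCocone X))) f

lemma yoneda_map_comp_presentationι_eq {X : Ind A} {j₁ j₂ : X.presentation.I}
    (w₁ : k ⟶ s.obj (X.presentation.F.obj j₁)) (w₂ : k ⟶ s.obj (X.presentation.F.obj j₂))
    (h : w₁ ≫ s.map (Ind.colimPresentationι adj X j₁) =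
      w₂ ≫ s.map (Ind.colimPresentationι adj X j₂)) :
    Ind.yoneda.map (r.map w₁ ≫ ρ.app _) ≫ Ind.presentationι X j₁ =
      Ind.yoneda.map (r.map w₂ ≫ ρ.app _) ≫ Ind.presentationι X j₂ := by
  obtain ⟨j, α, β, hαβ⟩ := IsFinitelyPresentable.exists_eq_of_isColimit
    (isColimitOfPreserves s (adj.isColimitCoconeOfCompRight (Ind.isColimitPresentationCocone X)))
    w₁ w₂ h
  rw [yoneda_map_comp_presentationι_map r s ρ α, yoneda_map_comp_presentationι_map r s ρ β]
  exact congr_arg (fun w => Ind.yoneda.map (r.map w ≫ ρ.app _) ≫ _) hαβ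

noncomputable def lift {X : Ind A} (f : k ⟶ s.obj (colimA.obj X)) :
    Ind.yoneda.obj (r.obj k) ⟶ X :=
  let h := exists_comp_map_colimPresentationι_eq s adj f
  Ind.yoneda.map (r.map h.choose_spec.choose ≫ ρ.app _) ≫ Ind.presentationι X h.choose

lemma lift_eq {X : Ind A} {f : k ⟶ s.obj (colimA.obj X)} {j : X.presentation.I}
    (w : k ⟶ s.obj (X.presentation.F.obj j))
    (hw : w ≫ s.map (Ind.colimPresentationι adj X j) = f) :
    lift r s ρ adj f = Ind.yoneda.map (r.map w ≫ ρ.app _) ≫ Ind.presentationι X j :=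
  yoneda_map_comp_presentationι_eq r s ρ adj _ w
    ((exists_comp_map_colimPresentationι_eq s adj f).choose_spec.choose_spec.trans hw.symm)

lemma lift_comp {k' : K} [IsFinitelyPresentable.{v} k'] (g : k' ⟶ k) {X : Ind A}
    (f : k ⟶ s.obj (colimA.obj X)) :
    lift r s ρ adj (g ≫ f) = Ind.yoneda.map (r.map g) ≫ lift r s ρ adj f := by
  obtain ⟨j, w, rfl⟩ := exists_comp_map_colimPresentationι_eq s adj f
  rw [lift_eq r s ρ adj w rfl, lift_eq r s ρ adj (g ≫ w) (Category.assoc _ _ _)]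
  simp

lemma lift_comp_map {X X' : Ind A} (f : k ⟶ s.obj (colimA.obj X)) (φ : X ⟶ X') :
    lift r s ρ adj (f ≫ s.map (colimA.map φ)) = lift r s ρ adj f ≫ φ := by
  obtain ⟨j, w, rfl⟩ := exists_comp_map_colimPresentationι_eq s adj f
  obtain ⟨j', q, hq⟩ := IsFinitelyPresentable.exists_hom_of_isColimit
    (Ind.isColimitPresentationCocone X') (Ind.presentationι X j ≫ φ)
  obtain ⟨u, rfl⟩ := Ind.yoneda.map_surjective q
  rw [lift_eq r s ρ adj w rfl, lift_eq r s ρ adj (w ≫ s.map u)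
    (by rw [Category.assoc, ← Functor.map_comp, ← Ind.colimPresentationι_comp_map adj φ u hq,
      Functor.map_comp, Category.assoc]),
    map_comp_map_comp_app, Functor.map_comp, Category.assoc, Category.assoc]
  exact congr_arg _ hq

lemma inv_counit_app_comp_map_lift {X : Ind A} (f : k ⟶ s.obj (colimA.obj X)) :
    inv (adj.counit.app (r.obj k)) ≫ colimA.map (lift r s ρ adj f) = r.map f ≫ ρ.app _ := by
  obtain ⟨j, w, rfl⟩ := exists_comp_map_colimPresentationι_eq s adj f
  rw [lift_eq r s ρ adj w rfl, map_comp_map_comp_app, Functor.map_comp, ← Category.assoc,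
    adj.inv_counit_app_comp_map_map, Category.assoc]
  rfl

end Lift

section Corepresentable

variable {C : Type v} [SmallCategory C] {A : Type u} [Category.{v} A]
  (r : Ind C ⥤ A) (s : A ⥤ Ind C) (ρ : s ⋙ r ≅ 𝟭 A) (a : A)

noncomputable abbrev diagram : (s.obj a).presentation.I ⥤ A :=
  (s.obj a).presentation.F ⋙ Ind.yoneda ⋙ r

noncomputable def cocone : Cocone (diagram r s a) where
  pt := a
  ι.app i := r.map (Ind.presentationι (s.obj a) i) ≫ ρ.hom.app a
  ι.naturality i i' α := by
    simp [← Functor.map_comp_assoc, Ind.yoneda_map_comp_presentationι]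

variable {colimA : Ind A ⥤ A} (adj : colimA ⊣ Ind.yoneda)

section

variable [PreservesFilteredColimits s]

noncomputable def desc {X : Ind A} (g : a ⟶ colimA.obj X) :
    colimit (diagram r s a ⋙ Ind.yoneda) ⟶ X :=
  colimit.desc _
    { pt := X
      ι.app i := lift r s ρ.hom adj (Ind.presentationι (s.obj a) i ≫ s.map g)
      ι.naturality i i' α := by
        dsimp
        rw [Category.comp_id, ← lift_comp, ← Category.assoc, Ind.yoneda_map_comp_presentationι] }

lemma desc_comp_map {X X' : Ind A} (g : a ⟶ colimA.obj X) (φ : X ⟶ X') :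
    desc r s ρ a adj (g ≫ colimA.map φ) = desc r s ρ a adj g ≫ φ :=
  colimit.hom_ext fun i => by
    simp [desc, ← lift_comp_map]

end

section

variable [PreservesFilteredColimits r]

noncomputable def isColimitCocone : IsColimit (cocone r s ρ a) :=
  (isColimitOfPreserves r (Ind.isColimitPresentationCocone (s.obj a))).ofIsoColimit
    (Cocone.ext (ρ.app a) fun _ => rfl)

noncomputable def unit : a ⟶ colimA.obj (colimit (diagram r s a ⋙ Ind.yoneda)) :=
  (isColimitCocone r s ρ a).desc (adj.coconeOfCompRight (colimit.cocone _))

lemma map_presentationι_comp_unit (i : (s.obj a).presentation.I) :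
    (r.map (Ind.presentationι (s.obj a) i) ≫ ρ.hom.app a) ≫ unit r s ρ a adj =
      inv (adj.counit.app _) ≫ colimA.map (colimit.ι (diagram r s a ⋙ Ind.yoneda) i) :=
  (isColimitCocone r s ρ a).fac (adj.coconeOfCompRight (colimit.cocone _)) i

end

variable [PreservesFilteredColimits r] [PreservesFilteredColimits s]

lemma unit_comp_map_desc {X : Ind A} (g : a ⟶ colimA.obj X) :
    unit r s ρ a adj ≫ colimA.map (desc r s ρ a adj g) = g :=
  (isColimitCocone r s ρ a).hom_ext fun i => by
    change (r.map (Ind.presentationι (s.obj a) i) ≫ ρ.hom.app a) ≫ _ =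
      (r.map (Ind.presentationι (s.obj a) i) ≫ ρ.hom.app a) ≫ g
    rw [← Category.assoc, map_presentationι_comp_unit, Category.assoc, ← Functor.map_comp, desc,
      colimit.ι_desc]
    exact (inv_counit_app_comp_map_lift r s ρ.hom adj _).trans
      (map_comp_map_comp_app r s ρ.hom _ g)

noncomputable def retractCoyoneda : Retract (colimA ⋙ coyoneda.obj (op a))
    (coyoneda.obj (op (colimit (diagram r s a ⋙ Ind.yoneda)))) where
  i.app _ := TypeCat.ofHom (desc r s ρ a adj)
  i.naturality _ _ φ := by
    ext g
    exact desc_comp_map r s ρ a adj g φ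
  r.app _ := TypeCat.ofHom (unit r s ρ a adj ≫ colimA.map ·)
  r.naturality _ _ φ := by
    ext f
    simp
  retract := by
    ext X g
    exact unit_comp_map_desc r s ρ a adj g

end Corepresentable

theorem isRightAdjoint_colim {C : Type v} [SmallCategory C] {A : Type u} [Category.{v} A]
    (r : Ind C ⥤ A) (s : A ⥤ Ind C) [PreservesFilteredColimits r] [PreservesFilteredColimits s]
    (ρ : s ⋙ r ≅ 𝟭 A) {colimA : Ind A ⥤ A} (adj : colimA ⊣ Ind.yoneda) :
    colimA.IsRightAdjoint :=
  Functor.isRightAdjoint_of_leftAdjointObjIsDefined_eq_top <| eq_top_iff.mpr fun a _ =>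
    Functor.isCorepresentable_of_retract_coyoneda (retractCoyoneda r s ρ a adj)

end RetractOfInd

end CategoryTheory

theorem stmt16_general {C : Type v} [SmallCategory C] {A : Type u} [Category.{v} A]
    (r : Ind C ⥤ A) (s : A ⥤ Ind C)
    [PreservesFilteredColimits r] [PreservesFilteredColimits s]
    (hrs : Nonempty (s ⋙ r ≅ 𝟭 A))
    (colimA : Ind A ⥤ A) (adj : colimA ⊣ Ind.yoneda) :
    ∃ L : A ⥤ Ind A, Nonempty (L ⊣ colimA) := by
  obtain ⟨ρ⟩ := hrs
  have := RetractOfInd.isRightAdjoint_colim r s ρ adj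
  exact ⟨colimA.leftAdjoint, ⟨Adjunction.ofIsRightAdjoint colimA⟩⟩

theorem stmt16 {C : Type v} [SmallCategory C] {A : Type u} [Category.{v} A]
    [HasFilteredColimits A]
    (r : Ind C ⥤ A) (s : A ⥤ Ind C)
    [PreservesFilteredColimits r] [PreservesFilteredColimits s]
    (hrs : Nonempty (s ⋙ r ≅ 𝟭 A))
    (colimA : Ind A ⥤ A) (adj : colimA ⊣ Ind.yoneda) :
    ∃ L : A ⥤ Ind A, Nonempty (L ⊣ colimA) :=
  stmt16_general r s hrs colimA adj
end
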